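/- arXiv:1512.08404 — 5 statements merged into one kernel-verified Lean document; each statement's English description precedes it below -/
import Mathlib

section
/- Define OV(0) = 0 and for h ≥ 1, OV(h+1) = 2·OV(h) + 2(h+1) + 2(h+2) − [if h+1 is odd then 2 else 0]. Then for all h ≥ 1, OV(h) = (29/3)·2^h − 4h − 9 + (1/3)·(−1)^h. -/
/-- The objective value of the recursive arrangement algorithm:
`OV 0 = 0`, `OV 1 = 6`, and for `h ≥ 1`,
`OV (h+1) = 2·OV h + 2(h+1) + 2(h+2) − (2 if h+1 odd else 0)`.
Then for all `h ≥ 1`, `OV h = (29/3)·2^h − 4h − 9 + (1/3)·(−1)^h`. -/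
theorem ov_closed_form (OV : ℕ → ℚ) (h0 : OV 0 = 0) (h1 : OV 1 = 6)
    (hrec : ∀ h : ℕ, 1 ≤ h →
      OV (h + 1) = 2 * OV h + 2 * ((h : ℚ) + 1) + 2 * ((h : ℚ) + 2)
        - (if Odd (h + 1) then 2 else 0)) :
    ∀ h : ℕ, 1 ≤ h →
      OV h = 29/3 * 2 ^ h - 4 * (h : ℚ) - 9 + 1/3 * (-1) ^ h := by
  intro h hh
  induction h with
  | zero => omega
  | succ n ih =>
    rcases Nat.eq_or_lt_of_le hh with he | hl
    · rw [← he]; rw [h1]; norm_num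
    · have hn : 1 ≤ n := by omega
      rw [hrec n hn, ih hn, pow_succ (-1 : ℚ)]
      rcases Nat.even_or_odd (n + 1) with he | ho
      · have hno : Odd n := by
          rw [Nat.even_iff] at he; rw [Nat.odd_iff]; omega
        rw [if_neg (by rw [Nat.odd_iff, Nat.even_iff] at *; omega),
          hno.neg_one_pow]
        push_cast; ring
      · have hne : Even n := by
          rw [Nat.odd_iff] at ho; rw [Nat.even_iff]; omega
        rw [if_pos ho, hne.neg_one_pow]
        push_cast; ring
end

section
/- Let G be a tree with vertex set V, and let 𝒱 = {V_1, …, V_k} be a partition of V. Let G' be the graph whose vertices are the connected components of the induced subgraphs G[V_i] (over all i), with two components adjacent iff some edge of G joins them. Then G' is a tree, and the number of edges of G with endpoints in different parts V_i, V_j (i ≠ j) equals |V(G')| − 1, i.e., equals the total number of connected components of all G[V_i] minus 1. -/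
/-- The subgraph of `G` keeping only the edges both of whose endpoints lie in the same
part of the partition given by `p`. -/
def partSubgraph {V ι : Type*} (G : SimpleGraph V) (p : V → ι) : SimpleGraph V where
  Adj u v := G.Adj u v ∧ p u = p v
  symm := ⟨fun _ _ h => ⟨h.1.symm, h.2.symm⟩⟩
  loopless := ⟨fun u h => G.loopless.irrefl u h.1⟩

/-- The quotient graph `G'`: its vertices are the connected components of the induced
subgraphs `G[V_i]` (i.e. the connected components of `partSubgraph G p`), two components
being adjacent iff some edge of `G` joins them. -/
def quotientGraph {V ι : Type*} (G : SimpleGraph V) (p : V → ι) :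
    SimpleGraph (partSubgraph G p).ConnectedComponent where
  Adj c c' := c ≠ c' ∧ ∃ u v, G.Adj u v ∧
    (partSubgraph G p).connectedComponentMk u = c ∧
    (partSubgraph G p).connectedComponentMk v = c'
  symm := by
    constructor
    rintro c c' ⟨hne, u, v, huv, hu, hv⟩
    exact ⟨hne.symm, v, u, huv.symm, hv, hu⟩
  loopless := ⟨fun c h => h.1 rfl⟩

/-!
Let `H` be the subgraph of the edges inside the parts, so that `E(G)` is the disjoint union of
`E(H)` and the cut edges. Every finite graph satisfies `|V| ≤ |E| + #components`: joining one
vertex of every component to a fixed vertex gives a connected graph with at most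
`#components - 1` extra edges. Applied to `H`, together with `|E(G)| + 1 = |V|`, this gives
`#cut + 1 ≤ #components(H) = |V(G')|`. Conversely `G'` is connected and every edge of `G'` is
the image of a cut edge, so `|V(G')| ≤ |E(G')| + 1 ≤ #cut + 1`. Hence equality holds throughout,
and a connected graph with `|V| = |E| + 1` is a tree.
-/

namespace SimpleGraph

variable {V : Type*}

theorem card_le_card_edgeSet_add_card_connectedComponent [Finite V] (G : SimpleGraph V) :
    Nat.card V ≤ Nat.card G.edgeSet + Nat.card G.ConnectedComponent := by
  cases isEmpty_or_nonempty V
  · simp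
  obtain ⟨v₀⟩ := ‹Nonempty V›
  set hub := (G.connectedComponentMk v₀).out
  set spokes : Set (Sym2 V) := Set.range fun c : G.ConnectedComponent => s(hub, c.out)
  set G' := G ⊔ fromEdgeSet spokes
  have hG' : G'.Connected := by
    have (v : V) : G'.Reachable hub v := by
      have hv : G.Reachable (G.connectedComponentMk v).out v :=
        ConnectedComponent.exact (Quot.out_eq _)
      refine Reachable.trans ?_ (hv.mono le_sup_left)
      by_cases h : hub = (G.connectedComponentMk v).out
      · rw [h]
      · exact Adj.reachable (Or.inr ⟨⟨_, rfl⟩, h⟩)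
    exact (connected_iff_exists_forall_reachable G').mpr ⟨hub, this⟩
  have hspokes : (fromEdgeSet spokes).edgeSet ⊆ spokes \ {s(hub, hub)} := by
    rw [edgeSet_fromEdgeSet]
    exact Set.sdiff_subset_sdiff_right (by simp)
  have hhub : s(hub, hub) ∈ spokes := ⟨G.connectedComponentMk v₀, rfl⟩
  calc Nat.card V ≤ Nat.card G'.edgeSet + 1 := hG'.card_vert_le_card_edgeSet_add_one
    _ ≤ Nat.card G.edgeSet + (Nat.card G.ConnectedComponent - 1) + 1 := by
      gcongr
      rw [Nat.card_coe_set_eq, Nat.card_coe_set_eq, edgeSet_sup]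
      refine (Set.ncard_union_le _ _).trans (Nat.add_le_add_left ?_ _)
      calc (fromEdgeSet spokes).edgeSet.ncard ≤ (spokes \ {s(hub, hub)}).ncard :=
            Set.ncard_le_ncard hspokes
        _ = spokes.ncard - 1 := Set.ncard_sdiff_singleton_of_mem hhub
        _ ≤ Nat.card G.ConnectedComponent - 1 := by
          rw [← Nat.card_coe_set_eq]
          gcongr
          exact Nat.card_le_card_of_surjective _ Set.rangeFactorization_surjective
    _ = _ := by
      have : 0 < Nat.card G.ConnectedComponent := Nat.card_pos
      omega

end SimpleGraph

open SimpleGraph Finset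

section Partition

variable {V ι : Type*} (G : SimpleGraph V) (p : V → ι)

instance [DecidableRel G.Adj] [DecidableEq ι] : DecidableRel (partSubgraph G p).Adj :=
  fun u v => inferInstanceAs (Decidable (G.Adj u v ∧ p u = p v))

def cutEdges [Fintype V] [DecidableRel G.Adj] [DecidableEq ι] : Finset (Sym2 V) :=
  G.edgeFinset.filter fun e => ¬ (Sym2.map p e).IsDiag

theorem card_edgeFinset_eq_partSubgraph_add_cutEdges [Fintype V] [DecidableRel G.Adj]
    [DecidableEq ι] : #G.edgeFinset = #(partSubgraph G p).edgeFinset + #(cutEdges G p) := by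
  have : (partSubgraph G p).edgeFinset = G.edgeFinset.filter fun e => (Sym2.map p e).IsDiag := by
    ext ⟨u, v⟩
    simp only [mem_filter, mem_edgeFinset, mem_edgeSet, Sym2.map_mk, Sym2.mk_isDiag_iff]
    rfl
  rw [this, cutEdges, card_filter_add_card_filter_not]

variable {G} in
theorem quotientGraph_connected (hG : G.Connected) : (quotientGraph G p).Connected := by
  have := hG.nonempty
  refine (connected_iff _).mpr ⟨ConnectedComponent.ind₂ fun u v => ?_, inferInstance⟩
  obtain ⟨w⟩ := hG.preconnected u v
  induction w with
  | nil => rfl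
  | @cons a b c hab _ ih =>
    refine Reachable.trans ?_ ih
    by_cases h : (partSubgraph G p).connectedComponentMk a =
        (partSubgraph G p).connectedComponentMk b
    · rw [h]
    · exact Adj.reachable ⟨h, a, b, hab, rfl, rfl⟩

theorem card_edgeSet_quotientGraph_le [Fintype V] [DecidableRel G.Adj] [DecidableEq ι] :
    Nat.card (quotientGraph G p).edgeSet ≤ #(cutEdges G p) := by
  have hsub : (quotientGraph G p).edgeSet ⊆
      Sym2.map (partSubgraph G p).connectedComponentMk '' (cutEdges G p : Set (Sym2 V)) := by
    rintro ⟨c, c'⟩ ⟨hne, u, v, huv, rfl, rfl⟩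
    refine ⟨s(u, v), ?_, rfl⟩
    simp only [cutEdges, coe_filter, Set.mem_ofPred_eq, mem_edgeFinset, mem_edgeSet, Sym2.map_mk,
      Sym2.mk_isDiag_iff]
    exact ⟨huv, fun hp => hne (ConnectedComponent.connectedComponentMk_eq_of_adj ⟨huv, hp⟩)⟩
  rw [Nat.card_coe_set_eq, ← Set.ncard_coe_finset]
  exact (Set.ncard_le_ncard hsub (Set.toFinite _)).trans (Set.ncard_image_le (Set.toFinite _))

end Partition

theorem tree_partition_quotient_general {V : Type*} [Fintype V]
    {ι : Type*} [DecidableEq ι]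
    (G : SimpleGraph V) [DecidableRel G.Adj] (hG : G.IsTree) (p : V → ι) :
    (quotientGraph G p).IsTree ∧
    (G.edgeFinset.filter (fun e => ¬ (Sym2.map p e).IsDiag)).card =
      Nat.card (partSubgraph G p).ConnectedComponent - 1 := by
  have hconn := quotientGraph_connected p hG.connected
  have hquot_vert := hconn.card_vert_le_card_edgeSet_add_one
  have hquot_edge := card_edgeSet_quotientGraph_le G p
  have hpart := (partSubgraph G p).card_le_card_edgeSet_add_card_connectedComponent
  have htree := hG.card_edgeFinset
  have hsplit := card_edgeFinset_eq_partSubgraph_add_cutEdges G p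
  rw [Nat.card_eq_fintype_card (α := V),
    Nat.card_eq_fintype_card (α := (partSubgraph G p).edgeSet), ← edgeFinset_card] at hpart
  refine ⟨isTree_iff_connected_and_card.mpr ⟨hconn, by omega⟩, ?_⟩
  change #(cutEdges G p) = _
  omega

/-- If `G` is a tree and `p` describes a partition of its vertices, then the quotient
graph obtained by contracting the connected components of the parts is again a tree, and
the number of edges of `G` whose endpoints lie in different parts equals the total number
of connected components induced by the parts minus one. -/
theorem tree_partition_quotient {V : Type*} [Fintype V] [DecidableEq V]
    {ι : Type*} [DecidableEq ι]
    (G : SimpleGraph V) [DecidableRel G.Adj] (hG : G.IsTree) (p : V → ι) :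
    (quotientGraph G p).IsTree ∧
    (G.edgeFinset.filter (fun e => ¬ (Sym2.map p e).IsDiag)).card =
      Nat.card (partSubgraph G p).ConnectedComponent - 1 :=
  tree_partition_quotient_general G hG p
end

section
/- Let h ≥ 1, 1 ≤ k' ≤ h − 1, k = 2^{k'}, t = h − k' + 2 ≥ 3, and e = ⌊(h+1)/t⌋ − 1. Then 2k − 2 − 2^{h+1}·(1 − (1/2^t)^{e+1})/(2^t·(1 − 1/2^t)) ≥ (10/7)·k − 2. -/
/-- For `1 ≤ k' ≤ h − 1`, `k = 2^k'`, `t = h − k' + 2 ≥ 3`, `e = ⌊(h+1)/t⌋ − 1`, the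
optimal cut value of the `k`-balanced partitioning problem on the complete binary tree of
height `h` satisfies
`2k − 2 − 2^(h+1)·(1 − (1/2^t)^(e+1))/(2^t·(1 − 1/2^t)) ≥ (10/7)·k − 2`. -/
theorem kbpp_lower_bound (h k' k t e : ℕ) (hh : 1 ≤ h) (hk1 : 1 ≤ k') (hk2 : k' ≤ h - 1)
    (hk : k = 2 ^ k') (ht : t = h - k' + 2) (ht3 : 3 ≤ t) (he : e = (h + 1) / t - 1) :
    (10 / 7 : ℚ) * k - 2 ≤
      2 * k - 2 - 2 ^ (h + 1) * (1 - (1 / 2 ^ t) ^ (e + 1)) / (2 ^ t * (1 - 1 / 2 ^ t)) := by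
  obtain ⟨m, hm⟩ : ∃ m, k' = m + 1 := ⟨k' - 1, by omega⟩
  have hht : h + 1 = t + m := by omega
  have hT1 : (8 : ℚ) ≤ 2 ^ t := by
    calc (8 : ℚ) = 2 ^ 3 := by norm_num
    _ ≤ 2 ^ t := pow_le_pow_right₀ (by norm_num) ht3
  have hxle : ((1 : ℚ) / 2 ^ t) ^ (e + 1) ≤ 1 := by
    apply pow_le_one₀ (by positivity)
    rw [div_le_one (by positivity)]
    linarith
  have hxpos : (0 : ℚ) ≤ ((1 : ℚ) / 2 ^ t) ^ (e + 1) := by positivity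
  have hDeq : (2 : ℚ) ^ t * (1 - 1 / 2 ^ t) = 2 ^ t - 1 := by
    field_simp
  have hD : (0 : ℚ) < 2 ^ t * (1 - 1 / 2 ^ t) := by rw [hDeq]; linarith
  have hkQ : (k : ℚ) = 2 * 2 ^ m := by
    rw [hk, hm]; push_cast [pow_succ]; ring
  have h2h : (2 : ℚ) ^ (h + 1) = 2 ^ t * 2 ^ m := by rw [hht, pow_add]
  have hmpos : (0 : ℚ) < 2 ^ m := by positivity
  have key : (2 : ℚ) ^ (h + 1) * (1 - (1 / 2 ^ t) ^ (e + 1)) / (2 ^ t * (1 - 1 / 2 ^ t))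
      ≤ (4 / 7 : ℚ) * k := by
    rw [div_le_iff₀ hD, hDeq, h2h, hkQ]
    nlinarith [mul_pos hmpos (show (0:ℚ) < 2 ^ t by linarith),
      mul_le_of_le_one_right (mul_pos hmpos (show (0:ℚ) < 2 ^ t by linarith)).le hxle]
  linarith
end

section
/- The sequence ρ(h) = ((29/3)·2^h − 4h − 26/3) / ((200/21)·2^h − 4h + (2√2/7)·2^{h/2} − 28/3) converges to 203/200 as h → ∞, and ρ(h) ≤ 203/200 for all h ≥ 4. -/
/-!
Numerator and denominator of `ρ(h)` are `(29/3) 2^h + o(2^h)` and `(200/21) 2^h + o(2^h)`,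
so `ρ(h) → (29/3) / (200/21) = 203/200`. For the bound put `t = √2^h`, so that `2^h = t²`
and `h ≤ t` once `h ≥ 4`: in `200 · num ≤ 203 · den` the `t²` terms cancel, leaving
`36 h + 484 ≤ 174 √2 t`.
-/

open Filter Asymptotics Topology

theorem tendsto_const_mul_add_div_const_mul_add_of_isLittleO {α : Type*} {l : Filter α}
    {u f g : α → ℝ} {a b : ℝ} (hb : b ≠ 0) (hu : ∀ᶠ n in l, u n ≠ 0)
    (hf : f =o[l] u) (hg : g =o[l] u) :
    Tendsto (fun n => (a * u n + f n) / (b * u n + g n)) l (𝓝 (a / b)) := by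
  have hnum : Tendsto (fun n => a + f n / u n) l (𝓝 (a + 0)) :=
    tendsto_const_nhds.add hf.tendsto_div_nhds_zero
  have hden : Tendsto (fun n => b + g n / u n) l (𝓝 (b + 0)) :=
    tendsto_const_nhds.add hg.tendsto_div_nhds_zero
  rw [add_zero] at hnum hden
  refine (hnum.div hden hb).congr' (hu.mono fun n hn => ?_)
  simp only [Pi.div_apply]
  rw [← mul_div_mul_right _ _ hn, add_mul, add_mul, div_mul_cancel₀ _ hn, div_mul_cancel₀ _ hn]

theorem natCast_le_sqrt_two_pow {n : ℕ} (hn : 4 ≤ n) : (n : ℝ) ≤ √2 ^ n := by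
  induction n, hn using Nat.le_induction with
  | base =>
    rw [show (4 : ℕ) = 2 * 2 from rfl, pow_mul, Real.sq_sqrt zero_le_two]
    norm_num
  | succ n hn ih =>
    -- `n + 1 ≤ √2 n` as soon as `n (√2 - 1) ≥ 1`
    have hsqrt : (1.4 : ℝ) ≤ √2 := Real.le_sqrt_of_sq_le (by norm_num)
    have hn' : (4 : ℝ) ≤ n := by exact_mod_cast hn
    push_cast
    rw [pow_succ]
    nlinarith

theorem sqrt_two_pow_sq (n : ℕ) : (√2 ^ n) ^ 2 = 2 ^ n := by
  rw [← pow_mul, mul_comm, pow_mul, Real.sq_sqrt zero_le_two]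

theorem ratio_le_of_four_le_of_le {x t : ℝ} (hx : 4 ≤ x) (hxt : x ≤ t) :
    (29/3 * t ^ 2 - 4 * x - 26/3) / (200/21 * t ^ 2 - 4 * x + 2 * √2 / 7 * t - 28/3)
      ≤ 203/200 := by
  have hsqrt : (1.4 : ℝ) ≤ √2 := Real.le_sqrt_of_sq_le (by norm_num)
  have hden : 0 < 200/21 * t ^ 2 - 4 * x + 2 * √2 / 7 * t - 28/3 := by
    nlinarith [mul_nonneg (sub_nonneg.2 hsqrt) (by linarith : (0 : ℝ) ≤ t)]
  rw [div_le_iff₀ hden]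
  nlinarith [mul_nonneg (sub_nonneg.2 hsqrt) (by linarith : (0 : ℝ) ≤ t)]

/-- The approximation-ratio sequence
`ρ(h) = ((29/3)·2^h − 4h − 26/3) / ((200/21)·2^h − 4h + (2√2/7)·2^(h/2) − 28/3)`
tends to `203/200` as `h → ∞`, and `ρ(h) ≤ 203/200` for all `h ≥ 4`. -/
theorem approximation_ratio_limit (ρ : ℕ → ℝ)
    (hρ : ∀ h : ℕ, ρ h =
      (29/3 * 2 ^ h - 4 * (h : ℝ) - 26/3) /
        (200/21 * 2 ^ h - 4 * (h : ℝ) + 2 * Real.sqrt 2 / 7 * (2 : ℝ) ^ ((h : ℝ) / 2)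
          - 28/3)) :
    Tendsto ρ atTop (nhds (203/200)) ∧ ∀ h : ℕ, 4 ≤ h → ρ h ≤ 203/200 := by
  have hρ' : ∀ h : ℕ, ρ h = (29/3 * 2 ^ h - 4 * (h : ℝ) - 26/3) /
      (200/21 * 2 ^ h - 4 * (h : ℝ) + 2 * √2 / 7 * √2 ^ h - 28/3) := fun h => by
    rw [hρ, Real.rpow_div_two_eq_sqrt _ zero_le_two, Real.rpow_natCast]
  refine ⟨?_, fun h hh => ?_⟩
  · have hid : (fun n : ℕ => (n : ℝ)) =o[atTop] fun n => (2 : ℝ) ^ n :=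
      isLittleO_coe_const_pow_of_one_lt one_lt_two
    have hone : (fun _ : ℕ => (1 : ℝ)) =o[atTop] fun n => (2 : ℝ) ^ n := by
      simpa using isLittleO_pow_pow_of_lt_left zero_le_one one_lt_two
    have hsqrt : (fun n : ℕ => √2 ^ n) =o[atTop] fun n => (2 : ℝ) ^ n :=
      isLittleO_pow_pow_of_lt_left (Real.sqrt_nonneg 2) (by norm_num)
    have hlim := tendsto_const_mul_add_div_const_mul_add_of_isLittleO (a := 29/3) (b := 200/21)
      (by norm_num) (Eventually.of_forall fun n => pow_ne_zero n two_ne_zero)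
      ((hid.const_mul_left (-4)).add (hone.const_mul_left (-26/3)))
      (((hid.const_mul_left (-4)).add (hsqrt.const_mul_left (2 * √2 / 7))).add
        (hone.const_mul_left (-28/3)))
    rw [show (29/3 : ℝ) / (200/21) = 203/200 by norm_num] at hlim
    refine hlim.congr fun h => ?_
    rw [hρ']
    ring_nf
  · rw [hρ', ← sqrt_two_pow_sq h]
    exact ratio_le_of_four_le_of_le (by exact_mod_cast hh) (natCast_le_sqrt_two_pow hh)
end

section
/- Let G be a star graph with n vertices (one central vertex adjacent to the other n−1), and let T be a complete d-regular tree of height h = ⌈log_d n⌉ with 2 ≤ d ≤ n. The minimum over injective arrangements φ of the vertices of G into leaves of T of Σ_{edges (u,v)} d_T(φ(u),φ(v)) equals 2·(h·n − (d^h − 1)/(d − 1)). -/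
/-!
Leaves of the complete `d`-ary tree of height `h` are the numbers `i < d ^ h`, and leaves `i`, `j`
have a common ancestor `e` levels up iff `i / d ^ e = j / d ^ e`; their distance is twice the
least such `e`. Counting these heights level by level, an arrangement `φ` with centre `c` costs
`2 ∑_{t < h} #{v | the leaves φ c, φ v do not meet within t levels}`. At most `d ^ t` leaves meet
`φ c` within `t` levels, so by injectivity the `t`-th term is at least `n - d ^ t`; placing the star
on the first `n` leaves attains every one of these bounds, and
`∑_{t < h} (n - d ^ t) = h n - (d ^ h - 1) / (d - 1)`.
-/

/-- The complete `d`-regular tree of height `h`: vertices are pairs of a level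
`k ∈ {0,…,h}` and an index in `Fin (d^k)`; the parent of vertex `m` at level `k+1`
is vertex `m / d` at level `k`.  Leaves are the vertices at level `h`, and the
canonical order of leaves is the order of their indices. -/
def dAryTree (d h : ℕ) : SimpleGraph ((k : Fin (h + 1)) × Fin (d ^ (k : ℕ))) where
  Adj x y := (x.1.val + 1 = y.1.val ∧ x.2.val = y.2.val / d) ∨
             (y.1.val + 1 = x.1.val ∧ y.2.val = x.2.val / d)
  symm := ⟨fun _ _ hxy => hxy.symm⟩
  loopless := ⟨by rintro x (⟨h1, _⟩ | ⟨h1, _⟩) <;> omega⟩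

/-- The `i`-th leaf (in canonical order) of the complete `d`-regular tree of height `h`. -/
def leafVert (d h : ℕ) (i : Fin (d ^ h)) : (k : Fin (h + 1)) × Fin (d ^ (k : ℕ)) :=
  ⟨⟨h, Nat.lt_succ_self h⟩, i⟩

/-- The distance in the complete `d`-regular tree of height `h` between its `i`-th and
`j`-th leaves (in canonical order). -/
noncomputable def leafDist (d h : ℕ) (i j : Fin (d ^ h)) : ℕ :=
  (dAryTree d h).dist (leafVert d h i) (leafVert d h j)

/-- Given an arrangement `φ` of vertices on leaves, the leaf distance associated to an
unordered pair of vertices. -/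
noncomputable def edgeDist {V : Type*} (d h : ℕ) (φ : V → Fin (d ^ h)) : Sym2 V → ℕ :=
  Sym2.lift ⟨fun u v => leafDist d h (φ u) (φ v), fun _ _ => SimpleGraph.dist_comm⟩

/-- The objective value of an arrangement `φ` of the star graph on `Fin n` (with central
vertex `0` adjacent to all other vertices) on the leaves of the complete `d`-regular tree
of height `h`: the sum of leaf distances over all edges of the star. -/
noncomputable def starCost (d h n : ℕ) (φ : Fin n → Fin (d ^ h)) : ℕ :=
  ∑ v : Fin n, if v.val = 0 then 0 else leafDist d h (φ ⟨0, v.pos⟩) (φ v)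

open SimpleGraph Finset

theorem Finset.sum_eq_sum_range_card_sub_card_filter_le {ι : Type*} (s : Finset ι) (f : ι → ℕ)
    {h : ℕ} (hf : ∀ i ∈ s, f i ≤ h) :
    ∑ i ∈ s, f i = ∑ t ∈ range h, (#s - #{i ∈ s | f i ≤ t}) := calc
  ∑ i ∈ s, f i = ∑ i ∈ s, #{t ∈ range h | t < f i} := by
    refine sum_congr rfl fun i hi => ?_
    rw [show {t ∈ range h | t < f i} = range (f i) by
      ext t; simp only [mem_filter, mem_range]; have := hf i hi; omega,
      card_range]
  _ = ∑ t ∈ range h, #{i ∈ s | t < f i} :=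
    sum_card_bipartiteAbove_eq_sum_card_bipartiteBelow (fun i t => t < f i)
  _ = ∑ t ∈ range h, (#s - #{i ∈ s | f i ≤ t}) := by
    refine sum_congr rfl fun t _ => ?_
    have := card_filter_add_card_filter_not (s := s) (fun i => f i ≤ t)
    simp only [not_le] at this
    omega

theorem cast_sum_range_sub_pow {d n h : ℕ} (hd : d ≠ 1) (hpow : ∀ t < h, d ^ t ≤ n) :
    ((∑ t ∈ range h, (n - d ^ t) : ℕ) : ℚ) = h * n - ((d : ℚ) ^ h - 1) / ((d : ℚ) - 1) := by
  rw [Nat.cast_sum, sum_congr rfl fun t ht => Nat.cast_sub (hpow t (mem_range.1 ht)),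
    sum_sub_distrib, ← geom_sum_eq (by exact_mod_cast hd)]
  simp

section LcaHeight

variable {d h : ℕ}

theorem exists_div_pow_eq (i j : Fin (d ^ h)) : ∃ e, (i : ℕ) / d ^ e = j / d ^ e :=
  ⟨h, by rw [Nat.div_eq_of_lt i.2, Nat.div_eq_of_lt j.2]⟩

/-- The height above the leaves of the lowest common ancestor of the leaves `i` and `j`. -/
def lcaHeight (i j : Fin (d ^ h)) : ℕ := Nat.find (exists_div_pow_eq i j)

theorem div_pow_lcaHeight (i j : Fin (d ^ h)) :
    (i : ℕ) / d ^ lcaHeight i j = j / d ^ lcaHeight i j :=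
  Nat.find_spec (exists_div_pow_eq i j)

theorem lcaHeight_le_iff {i j : Fin (d ^ h)} {t : ℕ} :
    lcaHeight i j ≤ t ↔ (i : ℕ) / d ^ t = j / d ^ t := by
  refine ⟨fun ht => ?_, fun ht => Nat.find_le ht⟩
  obtain ⟨s, rfl⟩ := Nat.exists_eq_add_of_le ht
  rw [pow_add, ← Nat.div_div_eq_div_mul, ← Nat.div_div_eq_div_mul,
    div_pow_lcaHeight]

theorem lcaHeight_le (i j : Fin (d ^ h)) : lcaHeight i j ≤ h :=
  lcaHeight_le_iff.2 (by rw [Nat.div_eq_of_lt i.2, Nat.div_eq_of_lt j.2])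

end LcaHeight

namespace DAryTree

variable {d h : ℕ}

def vertexAt (d h k m : ℕ) (hk : k ≤ h) (hm : m < d ^ k) :
    (k : Fin (h + 1)) × Fin (d ^ (k : ℕ)) :=
  ⟨⟨k, Nat.lt_succ_of_le hk⟩, ⟨m, hm⟩⟩

theorem exists_walk_up_length_eq (hd : 0 < d) {e l k m m' : ℕ} (hkl : k + e = l) (hl : l ≤ h)
    (hm : m < d ^ l) (hm' : m' < d ^ k) (hm'm : m' = m / d ^ e) :
    ∃ p : (dAryTree d h).Walk (vertexAt d h l m hl hm) (vertexAt d h k m' (by omega) hm'),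
      p.length = e := by
  induction e generalizing l m with
  | zero =>
    subst hkl
    rw [pow_zero, Nat.div_one] at hm'm
    subst hm'm
    exact ⟨Walk.nil, rfl⟩
  | succ e ih =>
    subst hkl hm'm
    have hparent : m / d < d ^ (k + e) := by
      rwa [Nat.div_lt_iff_lt_mul hd, ← pow_succ]
    have hadj : (dAryTree d h).Adj (vertexAt d h _ m hl hm)
        (vertexAt d h (k + e) (m / d) (by omega) hparent) :=
      Or.inr ⟨rfl, rfl⟩
    obtain ⟨p, hp⟩ := ih rfl (by omega) hparent (by rw [Nat.div_div_eq_div_mul, ← pow_succ'])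
    exact ⟨Walk.cons hadj p, by rw [Walk.length_cons, hp]⟩

theorem level_le_level_add_length {x y : (k : Fin (h + 1)) × Fin (d ^ (k : ℕ))}
    (p : (dAryTree d h).Walk x y) : (x.1 : ℕ) ≤ y.1 + p.length := by
  induction p with
  | nil => simp
  | cons hadj p ih =>
    rw [Walk.length_cons]
    rcases hadj with ⟨hlevel, -⟩ | ⟨hlevel, -⟩ <;> omega

theorem ancestor_eq_of_forall_mem_support_le {x y : (k : Fin (h + 1)) × Fin (d ^ (k : ℕ))}
    (p : (dAryTree d h).Walk x y) (k : ℕ) (hk : ∀ v ∈ p.support, k ≤ (v.1 : ℕ)) :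
    (x.2 : ℕ) / d ^ ((x.1 : ℕ) - k) = y.2 / d ^ ((y.1 : ℕ) - k) := by
  induction p with
  | nil => rfl
  | @cons u v w hadj p ih =>
    have hku : k ≤ (u.1 : ℕ) := hk u (by simp)
    have hkv : k ≤ (v.1 : ℕ) := hk v (by simp)
    refine Eq.trans ?_ (ih fun z hz => hk z (by simp [hz]))
    rcases hadj with ⟨hlevel, hparent⟩ | ⟨hlevel, hparent⟩
    · rw [hparent, Nat.div_div_eq_div_mul, ← pow_succ', show (v.1 : ℕ) - k = u.1 - k + 1 by omega]
    · rw [hparent, Nat.div_div_eq_div_mul, ← pow_succ', show (u.1 : ℕ) - k = v.1 - k + 1 by omega]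

end DAryTree

section LeafDist

open DAryTree

variable {d h : ℕ}

theorem exists_walk_leafVert_length_eq (hd : 0 < d) (i j : Fin (d ^ h)) :
    ∃ p : (dAryTree d h).Walk (leafVert d h i) (leafVert d h j), p.length = 2 * lcaHeight i j := by
  set e := lcaHeight i j
  have he : e ≤ h := lcaHeight_le i j
  have hanc : (i : ℕ) / d ^ e < d ^ (h - e) := by
    rw [Nat.div_lt_iff_lt_mul (pow_pos hd e), ← pow_add, Nat.sub_add_cancel he]
    exact i.2
  obtain ⟨p, hp⟩ := exists_walk_up_length_eq hd (by omega) le_rfl i.2 hanc rfl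
  obtain ⟨q, hq⟩ := exists_walk_up_length_eq hd (by omega) le_rfl j.2 hanc
    (div_pow_lcaHeight i j)
  rw [show leafVert d h i = vertexAt d h h i le_rfl i.2 from rfl,
    show leafVert d h j = vertexAt d h h j le_rfl j.2 from rfl]
  refine ⟨p.append q.reverse, ?_⟩
  rw [Walk.length_append, Walk.length_reverse, hp, hq, two_mul]

theorem two_mul_lcaHeight_le_length {i j : Fin (d ^ h)}
    (p : (dAryTree d h).Walk (leafVert d h i) (leafVert d h j)) :
    2 * lcaHeight i j ≤ p.length := by
  -- if the walk never climbs to level `h - lcaHeight i j`, the ancestor of `i` one level lower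
  -- is an ancestor of `j` too, contradicting the minimality of `lcaHeight i j`
  obtain ⟨v, hv, hvh⟩ : ∃ v ∈ p.support, (v.1 : ℕ) + lcaHeight i j ≤ h := by
    by_contra! hbelow
    have hstart := hbelow _ p.start_mem_support
    have hanc := ancestor_eq_of_forall_mem_support_le p (h + 1 - lcaHeight i j)
      fun v hv => by have := hbelow v hv; omega
    have := lcaHeight_le_iff.2 hanc
    simp only [leafVert] at hstart this
    omega
  have hsplit := congrArg Walk.length (p.take_spec hv)
  rw [Walk.length_append] at hsplit
  have hup := level_le_level_add_length (p.takeUntil v hv)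
  have hdown := level_le_level_add_length (p.dropUntil v hv).reverse
  rw [Walk.length_reverse] at hdown
  change h ≤ _ at hup hdown
  omega

theorem leafDist_eq_two_mul_lcaHeight (hd : 0 < d) (i j : Fin (d ^ h)) :
    leafDist d h i j = 2 * lcaHeight i j := by
  obtain ⟨p, hp⟩ := exists_walk_leafVert_length_eq hd i j
  obtain ⟨q, hq⟩ := Reachable.exists_walk_length_eq_dist ⟨p⟩
  refine le_antisymm (hp ▸ dist_le p) ?_
  rw [leafDist, ← hq]
  exact two_mul_lcaHeight_le_length q

end LeafDist

section StarCost

variable {d h n : ℕ}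

theorem card_filter_lcaHeight_le (hd : 0 < d) (i : Fin (d ^ h)) (t : ℕ) :
    #{j | lcaHeight i j ≤ t} ≤ d ^ t := by
  have hdt : 0 < d ^ t := pow_pos hd t
  -- a leaf below the ancestor of `i` at height `t` is determined by its residue mod `d ^ t`
  calc #{j | lcaHeight i j ≤ t} ≤ #(range (d ^ t)) :=
        card_le_card_of_injOn (fun j => (j : ℕ) % d ^ t)
          (fun j _ => mem_range.2 (Nat.mod_lt _ hdt)) fun j hj j' hj' hjj' => ?_
    _ = d ^ t := card_range _
  simp only [coe_filter, mem_univ, true_and, lcaHeight_le_iff] at hj hj'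
  exact Fin.ext (Nat.ext_div_modEq (hj.symm.trans hj') hjj')

theorem sum_range_sub_pow_le_sum_lcaHeight (hd : 0 < d) {φ : Fin n → Fin (d ^ h)}
    (hφ : Function.Injective φ) (i : Fin (d ^ h)) :
    ∑ t ∈ range h, (n - d ^ t) ≤ ∑ v, lcaHeight i (φ v) := by
  rw [sum_eq_sum_range_card_sub_card_filter_le _ _ fun v _ => lcaHeight_le i (φ v), card_univ,
    Fintype.card_fin]
  gcongr with t
  calc #{v | lcaHeight i (φ v) ≤ t} ≤ #{j | lcaHeight i j ≤ t} :=
        card_le_card_of_injOn φ (fun v hv => by simpa using hv) hφ.injOn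
    _ ≤ d ^ t := card_filter_lcaHeight_le hd i t

theorem sum_lcaHeight_castLE (hd : 0 < d) (hn : n ≤ d ^ h) :
    ∑ v : Fin n, lcaHeight (⟨0, pow_pos hd h⟩ : Fin (d ^ h)) (Fin.castLE hn v) =
      ∑ t ∈ range h, (n - d ^ t) := by
  rw [sum_eq_sum_range_card_sub_card_filter_le _ _ fun v _ => lcaHeight_le _ _, card_univ,
    Fintype.card_fin]
  refine sum_congr rfl fun t _ => ?_
  have hlt : ∀ v : Fin n, lcaHeight ⟨0, pow_pos hd h⟩ (Fin.castLE hn v) ≤ t ↔ (v : ℕ) < d ^ t := by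
    intro v
    rw [lcaHeight_le_iff, Fin.val_castLE, Nat.zero_div, eq_comm, Nat.div_eq_zero_iff_lt
      (pow_pos hd t)]
  simp only [hlt, Fin.card_filter_val_lt]
  omega

theorem starCost_succ (hd : 0 < d) (φ : Fin (n + 1) → Fin (d ^ h)) :
    starCost d h (n + 1) φ = 2 * ∑ v, lcaHeight (φ 0) (φ v) := by
  rw [starCost, mul_sum]
  refine sum_congr rfl fun v _ => ?_
  split_ifs with hv
  · rw [show v = 0 from Fin.ext hv, show lcaHeight (φ 0) (φ 0) = 0 from
      Nat.le_zero.1 (lcaHeight_le_iff.2 rfl), mul_zero]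
  · exact leafDist_eq_two_mul_lcaHeight hd _ _

end StarCost

theorem star_optimal_value_general (n d : ℕ) (hd : 2 ≤ d) :
    IsLeast {c : ℚ | ∃ φ : Fin n → Fin (d ^ Nat.clog d n), Function.Injective φ ∧
        c = (starCost d (Nat.clog d n) n φ : ℚ)}
      (2 * ((Nat.clog d n : ℚ) * n - ((d : ℚ) ^ Nat.clog d n - 1) / ((d : ℚ) - 1))) := by
  obtain _ | n := n
  · simp [starCost, Function.injective_of_subsingleton]
  have hfit : n + 1 ≤ d ^ Nat.clog d (n + 1) := Nat.le_pow_clog hd _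
  rw [← cast_sum_range_sub_pow (by omega) fun t ht => (Nat.pow_lt_of_lt_clog ht).le]
  refine ⟨⟨Fin.castLE hfit, Fin.castLE_injective hfit, ?_⟩, ?_⟩
  · rw [starCost_succ (by omega)]
    exact_mod_cast (congrArg (2 * ·) (sum_lcaHeight_castLE (by omega) hfit)).symm
  · rintro _ ⟨φ, hφ, rfl⟩
    rw [starCost_succ (by omega)]
    exact_mod_cast Nat.mul_le_mul_left 2 (sum_range_sub_pow_le_sum_lcaHeight (by omega) hφ (φ 0))

/-- For a star graph with `n` vertices and a complete `d`-regular host tree of height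
`h = ⌈log_d n⌉` (`2 ≤ d ≤ n`), the minimum over injective arrangements of the total
leaf-distance is exactly `2·(h·n − (d^h − 1)/(d − 1))`. -/
theorem star_optimal_value (n d : ℕ) (hd : 2 ≤ d) (hdn : d ≤ n) :
    IsLeast {c : ℚ | ∃ φ : Fin n → Fin (d ^ Nat.clog d n), Function.Injective φ ∧
        c = (starCost d (Nat.clog d n) n φ : ℚ)}
      (2 * ((Nat.clog d n : ℚ) * n - ((d : ℚ) ^ Nat.clog d n - 1) / ((d : ℚ) - 1))) :=
  star_optimal_value_general n d hd
end
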